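/- arXiv:2404.15017 — 2 statements merged into one kernel-verified Lean document; each statement's English description precedes it below -/
import Mathlib

section
/- Let {(B_m,G_m)}_{m=1}^M be a deterministic tiling of [T]×[p], and let ε ∈ R^{T×p} be a random matrix satisfying H_0 (jointly independent columns) and local exchangeability with respect to the tiling. For each tile m let L_{(m)} ∈ R^{|G_m|×k} be a deterministic matrix with L_{(m)}ᵀ L_{(m)} invertible, let H_m = I − L_{(m)}(L_{(m)}ᵀ L_{(m)})⁻¹ L_{(m)}ᵀ, and define the mosaic residual matrix ε̂ ∈ R^{T×p} by ε̂_{B_m,G_m} := ε_{(m)} H_m. For r = 1,…,R let P_m^{(r)} ∈ R^{|B_m|×|B_m|} be i.i.d. uniformly random permutation matrices, independent of ε, and define ε̃^{(r)} ∈ R^{T×p} by ε̃^{(r)}_{B_m,G_m} := P_m^{(r)} ε_{(m)} H_m. Then for every measurable test statistic S : R^{T×p} → R, the p-value p_val = (1 + Σ_{r=1}^R 1{S(ε̂) ≤ S(ε̃^{(r)})})/(R+1) satisfies P(p_val ≤ α) ≤ α for every α ∈ (0,1). -/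
/-!
A choice `g` of a permutation inside every row block `B m` acts on matrices by permuting, in
each column, the rows within each tile. The law of `ε` is invariant under this action: each
column is permuted within its tiles (local exchangeability) and the columns are independent.
Multiplying each tile on the right by `H m` commutes with the action, so the law of `ε̂` is
invariant as well. Since the `g⁽ʳ⁾` are i.i.d. uniform and independent of `ε̂`, exchanging `ε̂`
with `ε̃⁽ʳ⁰⁾ = g⁽ʳ⁰⁾ ε̂` amounts to the measure-preserving change of variables
`(g, y) ↦ ((g⁽ʳ⁰⁾)⁻¹ g, g⁽ʳ⁰⁾ y)`, so `S(ε̂), S(ε̃⁽¹⁾), …, S(ε̃⁽ᴿ⁾)` are exchangeable. At most `k`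
of `R + 1` reals are dominated by at most `k` of them (themselves included), so by
exchangeability this happens to the first one with probability at most `k / (R + 1)`.
-/

open MeasureTheory ProbabilityTheory Matrix

instance permMeasurableSpace {α : Type*} : MeasurableSpace (Equiv.Perm α) := ⊤

/-- The uniform probability measure on the permutations of a finite type. -/
noncomputable def uniformPermMeasure (α : Type*) [Fintype α] [DecidableEq α] :
    Measure (Equiv.Perm α) :=
  haveI : Nonempty (Equiv.Perm α) := ⟨1⟩
  (PMF.uniformOfFintype (Equiv.Perm α)).toMeasure

open scoped ENNReal
open Finset

instance {α : Type*} : DiscreteMeasurableSpace (Equiv.Perm α) := ⟨fun _ => trivial⟩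

instance (α : Type*) [Fintype α] [DecidableEq α] :
    IsProbabilityMeasure (uniformPermMeasure α) := by
  unfold uniformPermMeasure
  infer_instance

theorem uniformPermMeasure_singleton {α : Type*} [Fintype α] [DecidableEq α] (σ : Equiv.Perm α) :
    uniformPermMeasure α {σ} = (Fintype.card (Equiv.Perm α) : ℝ≥0∞)⁻¹ := by
  rw [uniformPermMeasure, PMF.toMeasure_apply_singleton _ _ (measurableSet_singleton σ),
    PMF.uniformOfFintype_apply]

theorem pi_uniformPermMeasure_singleton {ι : Type*} [Fintype ι] {κ : ι → Type*}
    [∀ i, Fintype (κ i)] [∀ i, DecidableEq (κ i)] (g : ∀ i, Equiv.Perm (κ i)) :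
    Measure.pi (fun i => uniformPermMeasure (κ i)) {g} =
      ∏ i, (Fintype.card (Equiv.Perm (κ i)) : ℝ≥0∞)⁻¹ := by
  rw [← Set.univ_pi_singleton g, Measure.pi_pi]
  exact prod_congr rfl fun i _ => uniformPermMeasure_singleton (g i)

section Countable

variable {α β : Type*} [MeasurableSpace α] [Countable α] [MeasurableSingletonClass α]
  [MeasurableSpace β] [MeasurableSingletonClass β]

theorem map_equiv_apply_singleton (Q : Measure α) (θ : α ≃ β) (b : β) :
    Q.map θ {b} = Q {θ.symm b} := by
  rw [Measure.map_apply (measurable_of_countable θ) (measurableSet_singleton b)]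
  congr 1
  ext
  simp [Equiv.eq_symm_apply]

theorem map_equiv_eq_self_of_measure_singleton_eq {Q : Measure α} (hQ : ∀ a b, Q {a} = Q {b})
    (θ : α ≃ α) : Q.map θ = Q :=
  Measure.ext_of_singleton fun a => by rw [map_equiv_apply_singleton, hQ]

end Countable

section Rank

variable {ι β : Type*} [Fintype ι] [LinearOrder β]

noncomputable def rankCount (x : ι → β) (i : ι) : ℕ := #{j | x i ≤ x j}

theorem card_rankCount_le (x : ι → β) (k : ℕ) : #{i | rankCount x i ≤ k} ≤ k := by
  set s : Finset ι := {i | rankCount x i ≤ k}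
  obtain h | hs := s.eq_empty_or_nonempty
  · simp [h]
  obtain ⟨i₀, hi₀, hmin⟩ := s.exists_min_image x hs
  calc #s ≤ rankCount x i₀ := card_le_card fun j hj => mem_filter.2 ⟨mem_univ _, hmin j hj⟩
    _ ≤ k := (mem_filter.1 hi₀).2

theorem rankCount_comp_perm (x : ι → β) (σ : Equiv.Perm ι) (i : ι) :
    rankCount (x ∘ σ) i = rankCount x (σ i) :=
  card_equiv σ fun j => by simp

end Rank

theorem measurable_rankCount {n : ℕ} (i : Fin n) :
    Measurable fun x : Fin n → ℝ => rankCount x i := by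
  simp only [rankCount, card_filter]
  exact Finset.measurable_sum _ fun j _ => Measurable.ite
    (measurableSet_le (measurable_pi_apply i) (measurable_pi_apply j)) measurable_const
    measurable_const

theorem rankCount_zero_eq {n : ℕ} (x : Fin (n + 1) → ℝ) :
    (rankCount x 0 : ℝ) = 1 + ∑ r : Fin n, if x 0 ≤ x r.succ then (1 : ℝ) else 0 := by
  rw [rankCount, card_filter, Fin.sum_univ_succ, if_pos le_rfl]
  push_cast
  rfl

section Exchangeable

variable {Ω : Type*} [MeasurableSpace Ω] {μ : Measure Ω} [IsProbabilityMeasure μ] {n : ℕ}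
  {X : Ω → Fin (n + 1) → ℝ}

theorem mul_measure_rankCount_le (hX : Measurable X)
    (hexch : ∀ i, μ.map (fun ω => X ω ∘ Equiv.swap 0 i) = μ.map X) (k : ℕ) :
    (n + 1) * μ {ω | rankCount (X ω) 0 ≤ k} ≤ k := by
  set A : Fin (n + 1) → Set Ω := fun i => {ω | rankCount (X ω) i ≤ k}
  have hA : ∀ i, MeasurableSet (A i) := fun i =>
    measurableSet_le ((measurable_rankCount i).comp hX) measurable_const
  have hA_eq : ∀ i, μ (A i) = μ (A 0) := by
    intro i
    have hD : MeasurableSet {x : Fin (n + 1) → ℝ | rankCount x i ≤ k} :=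
      measurableSet_le (measurable_rankCount i) measurable_const
    have hXσ : Measurable fun ω => X ω ∘ Equiv.swap 0 i := by fun_prop
    calc μ (A i) = μ.map X {x | rankCount x i ≤ k} := (Measure.map_apply hX hD).symm
      _ = μ (A 0) := by
        rw [← hexch i, Measure.map_apply hXσ hD]
        simp [A, rankCount_comp_perm]
  calc (n + 1) * μ (A 0) = ∑ i, μ (A i) := by simp [hA_eq]
    _ = ∑ i, ∫⁻ ω, (A i).indicator 1 ω ∂μ := by simp [lintegral_indicator_one (hA _)]
    _ = ∫⁻ ω, ∑ i, (A i).indicator 1 ω ∂μ :=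
      (lintegral_finsetSum _ fun i _ => measurable_const.indicator (hA i)).symm
    _ ≤ ∫⁻ _, (k : ℝ≥0∞) ∂μ := lintegral_mono fun ω => by
      simpa [Set.indicator_apply, A] using card_rankCount_le (X ω) k
    _ = k := by simp

theorem measure_pValue_le (hX : Measurable X)
    (hexch : ∀ i, μ.map (fun ω => X ω ∘ Equiv.swap 0 i) = μ.map X) {α : ℝ} (hα : 0 ≤ α) :
    μ {ω | (1 + ∑ r : Fin n, if X ω 0 ≤ X ω r.succ then (1 : ℝ) else 0) / (n + 1) ≤ α} ≤
      ENNReal.ofReal α := by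
  set k := ⌊α * (n + 1)⌋₊
  have hevent : {ω | (1 + ∑ r : Fin n, if X ω 0 ≤ X ω r.succ then (1 : ℝ) else 0) / (n + 1) ≤ α}
      = {ω | rankCount (X ω) 0 ≤ k} := by
    ext ω
    rw [Set.mem_ofPred_eq, Set.mem_ofPred_eq, ← rankCount_zero_eq, div_le_iff₀ (by positivity),
      Nat.le_floor_iff (by positivity)]
  have hk : (k : ℝ≥0∞) ≤ (n + 1) * ENNReal.ofReal α := by
    calc (k : ℝ≥0∞) = ENNReal.ofReal k := (ENNReal.ofReal_natCast k).symm
      _ ≤ ENNReal.ofReal (α * (n + 1)) := ENNReal.ofReal_le_ofReal (Nat.floor_le (by positivity))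
      _ = (n + 1) * ENNReal.ofReal α := by
        rw [mul_comm, ENNReal.ofReal_mul (by positivity)]
        norm_cast
  rw [hevent]
  exact (ENNReal.mul_le_mul_iff_right (a := n + 1) (by simp) (by simp)).mp
    ((mul_measure_rankCount_le hX hexch k).trans hk)

end Exchangeable

section Orbit

variable {Γ E : Type*} {R : ℕ} {a : Γ → E → E}

/-- Re-expresses the orbit points `a (g r) y` relative to the new base point `a (g r₀) y`. -/
def rebase [Group Γ] (r₀ : Fin R) : Equiv.Perm (Fin R → Γ) :=
  Function.Involutive.toPerm (fun g r => if r = r₀ then (g r₀)⁻¹ else (g r₀)⁻¹ * g r)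
    fun g => funext fun r => by by_cases hr : r = r₀ <;> simp [hr]

@[simp]
theorem rebase_apply [Group Γ] (r₀ : Fin R) (g : Fin R → Γ) (r : Fin R) :
    rebase r₀ g r = if r = r₀ then (g r₀)⁻¹ else (g r₀)⁻¹ * g r :=
  rfl

def orbitStats (S : E → ℝ) (a : Γ → E → E) (g : Fin R → Γ) (y : E) : Fin (R + 1) → ℝ :=
  Fin.cons (S y) fun r => S (a (g r) y)

theorem orbitStats_comp_swap [Group Γ] (ha_mul : ∀ g h y, a h (a g y) = a (g * h) y)
    (ha_one : ∀ y, a 1 y = y) (S : E → ℝ) (g : Fin R → Γ) (y : E) (r₀ : Fin R) :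
    orbitStats S a g y ∘ Equiv.swap 0 r₀.succ = orbitStats S a (rebase r₀ g) (a (g r₀) y) := by
  funext i
  induction i using Fin.cases with
  | zero => simp [orbitStats]
  | succ r =>
    by_cases hr : r = r₀
    · subst hr
      simp [orbitStats, ha_mul, ha_one]
    · rw [Function.comp_apply, Equiv.swap_apply_of_ne_of_ne (Fin.succ_ne_zero r)
        (by simpa using hr)]
      simp [orbitStats, hr, ha_mul]

variable [MeasurableSpace Γ] [Countable Γ] [MeasurableSingletonClass Γ] [MeasurableSpace E]

theorem measurable_orbitStats {S : E → ℝ} (hS : Measurable S) (ha : ∀ g, Measurable (a g)) :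
    Measurable fun x : (Fin R → Γ) × E => orbitStats S a x.1 x.2 :=
  measurable_from_prod_countable_right fun g => measurable_pi_lambda _ fun i => by
    induction i using Fin.cases with
    | zero => exact hS
    | succ r => exact hS.comp (ha (g r))

theorem map_orbitStats_comp_swap [Group Γ] {Ω : Type*} [MeasurableSpace Ω] {μ : Measure Ω}
    {G : Ω → Fin R → Γ} {Y : Ω → E} (hG : Measurable G) (hY : Measurable Y)
    {Q : Measure (Fin R → Γ)} [SFinite Q] (hQ : ∀ g h, Q {g} = Q {h})
    {ν : Measure E} [SFinite ν] (hlaw : μ.map (fun ω => (G ω, Y ω)) = Q.prod ν)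
    (ha : ∀ g, Measurable (a g)) (ha_mul : ∀ g h y, a h (a g y) = a (g * h) y)
    (ha_one : ∀ y, a 1 y = y) (hν : ∀ g, ν.map (a g) = ν) {S : E → ℝ} (hS : Measurable S)
    (i : Fin (R + 1)) :
    μ.map (fun ω => orbitStats S a (G ω) (Y ω) ∘ Equiv.swap 0 i) =
      μ.map fun ω => orbitStats S a (G ω) (Y ω) := by
  induction i using Fin.cases with
  | zero => simp
  | succ r₀ =>
    have hξ := measurable_orbitStats hS ha (R := R)
    have hpair : Measurable fun ω => (G ω, Y ω) := hG.prodMk hY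
    have hΨ : MeasurePreserving (fun x : (Fin R → Γ) × E => (rebase r₀ x.1, a (x.1 r₀) x.2))
        (Q.prod ν) (Q.prod ν) :=
      MeasurePreserving.skew_product
        ⟨measurable_of_countable _, map_equiv_eq_self_of_measure_singleton_eq hQ _⟩
        (measurable_from_prod_countable_right fun g => ha (g r₀))
        (Filter.Eventually.of_forall fun g => hν (g r₀))
    calc μ.map (fun ω => orbitStats S a (G ω) (Y ω) ∘ Equiv.swap 0 r₀.succ)
        = (Q.prod ν).map (fun x => orbitStats S a x.1 x.2 ∘ Equiv.swap 0 r₀.succ) := by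
          rw [← hlaw, Measure.map_map (by fun_prop) hpair]
          rfl
      _ = ((Q.prod ν).map fun x => (rebase r₀ x.1, a (x.1 r₀) x.2)).map
            (fun x => orbitStats S a x.1 x.2) := by
          rw [Measure.map_map hξ hΨ.measurable]
          congr 1
          funext x
          exact orbitStats_comp_swap ha_mul ha_one S x.1 x.2 r₀
      _ = μ.map fun ω => orbitStats S a (G ω) (Y ω) := by
          rw [hΨ.map_eq, ← hlaw, Measure.map_map hξ hpair]
          rfl

end Orbit

theorem ProbabilityTheory.iIndepFun.map_piMap_eq {Ω ι : Type*} [MeasurableSpace Ω] {μ : Measure Ω}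
    [IsProbabilityMeasure μ] [Fintype ι] {β : ι → Type*} [∀ i, MeasurableSpace (β i)]
    {X : ∀ i, Ω → β i} (hX : ∀ i, Measurable (X i)) (hind : iIndepFun X μ)
    {f : ∀ i, β i → β i} (hf : ∀ i, Measurable (f i))
    (hinv : ∀ i, (μ.map (X i)).map (f i) = μ.map (X i)) :
    μ.map (fun ω i => f i (X i ω)) = μ.map fun ω i => X i ω := by
  have : ∀ i, IsProbabilityMeasure ((μ.map (X i)).map (f i)) := fun i => by
    rw [hinv i]
    exact Measure.isProbabilityMeasure_map (hX i).aemeasurable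
  calc μ.map (fun ω i => f i (X i ω))
      = (μ.map fun ω i => X i ω).map fun x i => f i (x i) := by
        rw [Measure.map_map (by fun_prop) (by fun_prop)]
        rfl
    _ = μ.map fun ω i => X i ω := by
        rw [hind.map_fun_eq_pi_map fun i => (hX i).aemeasurable,
          Measure.pi_map_pi fun i => (hf i).aemeasurable]
        simp only [hinv]

structure Tiling (α β ι : Type*) where
  B : ι → Finset α
  G : ι → Finset β
  tile : α → β → ι
  mem_B : ∀ t j, t ∈ B (tile t j)
  mem_G : ∀ t j, j ∈ G (tile t j)
  eq_tile : ∀ m t j, t ∈ B m → j ∈ G m → m = tile t j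

namespace Tiling

variable {α β ι γ : Type*} (τ : Tiling α β ι)

abbrev Perms := ∀ m, Equiv.Perm {t : α // t ∈ τ.B m}

def rowFun (g : τ.Perms) (j : β) (t : α) : α := (g (τ.tile t j) ⟨t, τ.mem_B t j⟩).1

variable {τ} (g h : τ.Perms)

theorem rowFun_of_mem {m : ι} {t : α} {j : β} (ht : t ∈ τ.B m) (hj : j ∈ τ.G m) :
    τ.rowFun g j t = (g m ⟨t, ht⟩).1 := by
  obtain rfl := τ.eq_tile m t j ht hj
  rfl

theorem rowFun_mul (j : β) (t : α) : τ.rowFun (g * h) j t = τ.rowFun g j (τ.rowFun h j t) :=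
  (rowFun_of_mem g (h _ _).2 (τ.mem_G t j)).symm

def rowPerm (j : β) : Equiv.Perm α where
  toFun := τ.rowFun g j
  invFun := τ.rowFun g⁻¹ j
  left_inv t := by rw [← rowFun_mul, inv_mul_cancel]; rfl
  right_inv t := by rw [← rowFun_mul, mul_inv_cancel]; rfl

theorem tile_rowPerm (j : β) (t : α) : τ.tile (rowPerm g j t) j = τ.tile t j :=
  (τ.eq_tile _ _ _ (g _ _).2 (τ.mem_G t j)).symm

variable (τ) in
def permute (g : τ.Perms) (e : α → β → γ) : α → β → γ := fun t j => e (τ.rowFun g j t) j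

theorem permute_permute (e : α → β → γ) : τ.permute h (τ.permute g e) = τ.permute (g * h) e :=
  funext₂ fun t j => by simp only [permute, rowFun_mul]

theorem permute_one (e : α → β → γ) : τ.permute 1 e = e :=
  rfl

theorem measurable_permute [MeasurableSpace γ] :
    Measurable (τ.permute g : (α → β → γ) → α → β → γ) := by
  unfold permute
  fun_prop

variable (H : ∀ m, Matrix {j : β // j ∈ τ.G m} {j : β // j ∈ τ.G m} ℝ)

variable (τ) in
/-- Replaces every tile `e_{B m, G m}` by `e_{B m, G m} * H m`. -/
def residual (e : α → β → ℝ) : α → β → ℝ := fun t j =>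
  ∑ j' : {x // x ∈ τ.G (τ.tile t j)}, e t j'.1 * H (τ.tile t j) j' ⟨j, τ.mem_G t j⟩

theorem residual_of_mem (e : α → β → ℝ) {m : ι} {t : α} {j : β} (ht : t ∈ τ.B m)
    (hj : j ∈ τ.G m) :
    τ.residual H e t j = ∑ j' : {x // x ∈ τ.G m}, e t j'.1 * H m j' ⟨j, hj⟩ := by
  obtain rfl := τ.eq_tile m t j ht hj
  rfl

theorem residual_permute (e : α → β → ℝ) :
    τ.residual H (τ.permute g e) = τ.permute g (τ.residual H e) := by
  funext t j
  rw [permute, residual_of_mem H e (show τ.rowFun g j t ∈ τ.B (τ.tile t j) from (g _ _).2)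
    (τ.mem_G t j)]
  refine Finset.sum_congr rfl fun j' _ => ?_
  rw [permute, rowFun_of_mem g (τ.mem_B t j) j'.2]
  rfl

variable (τ) in
theorem measurable_residual : Measurable (τ.residual H : (α → β → ℝ) → α → β → ℝ) := by
  unfold residual
  fun_prop

theorem map_permute_map_residual {ν : Measure (α → β → ℝ)} (hν : ν.map (τ.permute g) = ν) :
    (ν.map (τ.residual H)).map (τ.permute g) = ν.map (τ.residual H) :=
  calc (ν.map (τ.residual H)).map (τ.permute g) = ν.map (τ.permute g ∘ τ.residual H) :=
        Measure.map_map (measurable_permute g) (τ.measurable_residual H)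
    _ = ν.map (τ.residual H ∘ τ.permute g) := by
        congr 1
        funext e
        exact (residual_permute g H e).symm
    _ = ν.map (τ.residual H) := by
        rw [← Measure.map_map (τ.measurable_residual H) (measurable_permute g), hν]

theorem map_permute_map_of_iIndepFun [Fintype β] {Ω : Type*} [MeasurableSpace Ω] {μ : Measure Ω}
    [IsProbabilityMeasure μ] {ε : Ω → α → β → ℝ} (hε : Measurable ε)
    (hindep : iIndepFun (fun j ω t => ε ω t j) μ)
    (hexch : ∀ j (σ : Equiv.Perm α), (∀ t, τ.tile (σ t) j = τ.tile t j) →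
      μ.map (fun ω t => ε ω (σ t) j) = μ.map fun ω t => ε ω t j) :
    (μ.map ε).map (τ.permute g) = μ.map ε := by
  have htr : Measurable fun (y : β → α → ℝ) t j => y j t := by fun_prop
  have hcol : ∀ j, Measurable fun ω t => ε ω t j := by fun_prop
  calc (μ.map ε).map (τ.permute g)
      = (μ.map fun ω j t => ε ω (rowPerm g j t) j).map fun y t j => y j t := by
        rw [Measure.map_map (measurable_permute g) hε, Measure.map_map htr (by fun_prop)]
        rfl
    _ = (μ.map fun ω j t => ε ω t j).map fun y t j => y j t := by
        congr 1
        refine hindep.map_piMap_eq hcol (f := fun j c => c ∘ rowPerm g j) (by fun_prop) fun j => ?_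
        rw [Measure.map_map (by fun_prop) (hcol j)]
        exact hexch j _ (tile_rowPerm g j)
    _ = μ.map ε := by
        rw [Measure.map_map htr (by fun_prop)]
        rfl

end Tiling

theorem mosaic_permutation_test_valid_general
    {Ω : Type*} [MeasurableSpace Ω] (μ : Measure Ω) [IsProbabilityMeasure μ]
    (T p M R : ℕ) (ε : Ω → Fin T → Fin p → ℝ) (hmeas : Measurable ε)
    -- the tiling: every `(t, j)` lies in exactly one rectangle `B m × G m`,
    -- namely the one indexed by `tile t j`:
    (B : Fin M → Finset (Fin T)) (G : Fin M → Finset (Fin p))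
    (tile : Fin T → Fin p → Fin M)
    (hB : ∀ t j, t ∈ B (tile t j)) (hG : ∀ t j, j ∈ G (tile t j))
    (huniq : ∀ m t j, t ∈ B m → j ∈ G m → m = tile t j)
    -- `H₀`: the columns of `ε` are jointly independent:
    (hcol_indep : iIndepFun (fun j ω => fun t => ε ω t j) μ)
    -- local exchangeability of `ε` with respect to the tiling:
    (hlocexch : ∀ (j : Fin p) (π : Equiv.Perm (Fin T)), (∀ t, tile (π t) j = tile t j) →
      Measure.map (fun ω => fun t => ε ω (π t) j) μ =
        Measure.map (fun ω => fun t => ε ω t j) μ)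
    -- the deterministic per-tile exposure matrices `L_(m) ∈ ℝ^{|G m| × k}` with
    -- `L_(m)ᵀ L_(m)` invertible, and the OLS projections `H m`:
    (H : (m : Fin M) → Matrix {j : Fin p // j ∈ G m} {j : Fin p // j ∈ G m} ℝ)
    -- the mosaic residual matrix `ε̂` with `ε̂_{B_m, G_m} := ε_(m) H_m`:
    (εh : Ω → Fin T → Fin p → ℝ)
    (hεh : ∀ ω t j, εh ω t j =
      ∑ j' : {x : Fin p // x ∈ G (tile t j)}, ε ω t j'.1 * H (tile t j) j' ⟨j, hG t j⟩)
    -- the i.i.d. uniformly random within-tile row permutations, independent of `ε`: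
    (π : (m : Fin M) → Fin R → Ω → Equiv.Perm {t : Fin T // t ∈ B m})
    (hπmeas : ∀ m r, Measurable (π m r))
    (hπ : Measure.map (fun ω => ((fun mr : Fin M × Fin R => π mr.1 mr.2 ω), ε ω)) μ =
      (Measure.pi fun mr : Fin M × Fin R =>
        uniformPermMeasure {t : Fin T // t ∈ B mr.1}).prod (Measure.map ε μ))
    -- the permuted residual matrices `ε̃⁽ʳ⁾` with `ε̃⁽ʳ⁾_{B_m,G_m} = P_m⁽ʳ⁾ ε_(m) H_m`:
    (εt : Fin R → Ω → Fin T → Fin p → ℝ)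
    (hεt : ∀ (r : Fin R) ω, εt r ω =
      fun t j => εh ω (π (tile t j) r ω ⟨t, hB t j⟩).1 j)
    -- an arbitrary measurable test statistic:
    (S : (Fin T → Fin p → ℝ) → ℝ) (hS : Measurable S) :
    ∀ α ∈ Set.Ioo (0 : ℝ) 1,
      μ {ω | (1 + ∑ r : Fin R, if S (εh ω) ≤ S (εt r ω) then (1 : ℝ) else 0) / (R + 1) ≤ α}
        ≤ ENNReal.ofReal α := by
  rintro α ⟨hα, -⟩
  let τ : Tiling (Fin T) (Fin p) (Fin M) := ⟨B, G, tile, hB, hG, huniq⟩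
  obtain rfl : εt = fun r ω => τ.permute (fun m => π m r ω) (εh ω) := funext₂ hεt
  obtain rfl : εh = fun ω => τ.residual H (ε ω) := funext fun ω => funext₂ (hεh ω)
  set Q := Measure.pi fun mr : Fin M × Fin R => uniformPermMeasure {t : Fin T // t ∈ B mr.1}
  let byRound : (∀ mr : Fin M × Fin R, Equiv.Perm {t : Fin T // t ∈ B mr.1}) ≃
      (Fin R → τ.Perms) :=
    ⟨fun g r m => g (m, r), fun g mr => g mr.2 mr.1, fun _ => rfl, fun _ => rfl⟩
  have hbyRound : Measurable byRound := measurable_of_countable _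
  have hQ : ∀ g h, Q.map byRound {g} = Q.map byRound {h} := fun g h => by
    simp only [map_equiv_apply_singleton, Q, pi_uniformPermMeasure_singleton]
  have hlaw : μ.map (fun ω => (fun r m => π m r ω, τ.residual H (ε ω))) =
      (Q.map byRound).prod ((μ.map ε).map (τ.residual H)) :=
    calc _ = (Q.prod (μ.map ε)).map (Prod.map byRound (τ.residual H)) := by
          rw [← hπ, Measure.map_map (hbyRound.prodMap (τ.measurable_residual H)) (by fun_prop)]
          rfl
      _ = _ := (Measure.map_prod_map Q (μ.map ε) hbyRound (τ.measurable_residual H)).symm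
  have hG : Measurable fun ω r m => π m r ω := by fun_prop
  have hY : Measurable fun ω => τ.residual H (ε ω) := (τ.measurable_residual H).comp hmeas
  have hperm : ∀ g : τ.Perms, Measurable (τ.permute g : (Fin T → Fin p → ℝ) → _) :=
    fun g => Tiling.measurable_permute g
  have hexch := map_orbitStats_comp_swap hG hY hQ hlaw hperm (Tiling.permute_permute (τ := τ))
    Tiling.permute_one (fun g => Tiling.map_permute_map_residual (τ := τ) g H
      (Tiling.map_permute_map_of_iIndepFun (τ := τ) g hmeas hcol_indep hlocexch)) hS
  exact measure_pValue_le ((measurable_orbitStats hS hperm).comp (hG.prodMk hY)) hexch hα.le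

/-- **validity of the mosaic permutation test.** For a deterministic tiling
`{(B m, G m)}` of `[T] × [p]`, a random matrix `ε` satisfying `H₀` (jointly independent
columns) and local exchangeability with respect to the tiling, OLS projections
`H m = I − L_(m) (L_(m)ᵀ L_(m))⁻¹ L_(m)ᵀ` built from deterministic exposures `L_(m)` with
`L_(m)ᵀ L_(m)` invertible, mosaic residuals `ε̂_{B_m,G_m} = ε_(m) H_m` and within-tile
permuted variants `ε̃⁽ʳ⁾_{B_m,G_m} = P_m⁽ʳ⁾ ε_(m) H_m` (for i.i.d. uniformly random
within-tile row permutations independent of `ε`), the p-value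
`p_val = (1 + ∑ᵣ 1{S(ε̂) ≤ S(ε̃⁽ʳ⁾)})/(R+1)` satisfies `P(p_val ≤ α) ≤ α` for all
`α ∈ (0,1)` and every measurable statistic `S`. -/
theorem mosaic_permutation_test_valid
    {Ω : Type*} [MeasurableSpace Ω] (μ : Measure Ω) [IsProbabilityMeasure μ]
    (T p k M R : ℕ) (ε : Ω → Fin T → Fin p → ℝ) (hmeas : Measurable ε)
    -- the tiling: every `(t, j)` lies in exactly one rectangle `B m × G m`,
    -- namely the one indexed by `tile t j`:
    (B : Fin M → Finset (Fin T)) (G : Fin M → Finset (Fin p))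
    (tile : Fin T → Fin p → Fin M)
    (hB : ∀ t j, t ∈ B (tile t j)) (hG : ∀ t j, j ∈ G (tile t j))
    (huniq : ∀ m t j, t ∈ B m → j ∈ G m → m = tile t j)
    -- `H₀`: the columns of `ε` are jointly independent:
    (hcol_indep : iIndepFun (fun j ω => fun t => ε ω t j) μ)
    -- local exchangeability of `ε` with respect to the tiling:
    (hlocexch : ∀ (j : Fin p) (π : Equiv.Perm (Fin T)), (∀ t, tile (π t) j = tile t j) →
      Measure.map (fun ω => fun t => ε ω (π t) j) μ =
        Measure.map (fun ω => fun t => ε ω t j) μ)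
    -- the deterministic per-tile exposure matrices `L_(m) ∈ ℝ^{|G m| × k}` with
    -- `L_(m)ᵀ L_(m)` invertible, and the OLS projections `H m`:
    (L : (m : Fin M) → Matrix {j : Fin p // j ∈ G m} (Fin k) ℝ)
    (hLinv : ∀ m, IsUnit ((L m)ᵀ * L m).det)
    (H : (m : Fin M) → Matrix {j : Fin p // j ∈ G m} {j : Fin p // j ∈ G m} ℝ)
    (hH : ∀ m, H m = 1 - L m * ((L m)ᵀ * L m)⁻¹ * (L m)ᵀ)
    -- the mosaic residual matrix `ε̂` with `ε̂_{B_m, G_m} := ε_(m) H_m`: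
    (εh : Ω → Fin T → Fin p → ℝ)
    (hεh : ∀ ω t j, εh ω t j =
      ∑ j' : {x : Fin p // x ∈ G (tile t j)}, ε ω t j'.1 * H (tile t j) j' ⟨j, hG t j⟩)
    -- the i.i.d. uniformly random within-tile row permutations, independent of `ε`:
    (π : (m : Fin M) → Fin R → Ω → Equiv.Perm {t : Fin T // t ∈ B m})
    (hπmeas : ∀ m r, Measurable (π m r))
    (hπ : Measure.map (fun ω => ((fun mr : Fin M × Fin R => π mr.1 mr.2 ω), ε ω)) μ =
      (Measure.pi fun mr : Fin M × Fin R =>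
        uniformPermMeasure {t : Fin T // t ∈ B mr.1}).prod (Measure.map ε μ))
    -- the permuted residual matrices `ε̃⁽ʳ⁾` with `ε̃⁽ʳ⁾_{B_m,G_m} = P_m⁽ʳ⁾ ε_(m) H_m`:
    (εt : Fin R → Ω → Fin T → Fin p → ℝ)
    (hεt : ∀ (r : Fin R) ω, εt r ω =
      fun t j => εh ω (π (tile t j) r ω ⟨t, hB t j⟩).1 j)
    -- an arbitrary measurable test statistic:
    (S : (Fin T → Fin p → ℝ) → ℝ) (hS : Measurable S) :
    ∀ α ∈ Set.Ioo (0 : ℝ) 1,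
      μ {ω | (1 + ∑ r : Fin R, if S (εh ω) ≤ S (εt r ω) then (1 : ℝ) else 0) / (R + 1) ≤ α}
        ≤ ENNReal.ofReal α :=
  mosaic_permutation_test_valid_general μ T p M R ε hmeas B G tile hB hG huniq hcol_indep hlocexch H
    εh hεh π hπmeas hπ εt hεt S hS
end

section
/- Let (S_0, S_1,…,S_R) be an exchangeable tuple of real random variables and define p_val = (1 + Σ_{r=1}^R 1{S_0 ≤ S_r})/(R+1). Then P(p_val ≤ α) ≤ α for every α ∈ (0,1). Moreover, if almost surely all of S_0,…,S_R are distinct, then p_val is uniformly distributed on the set {1/(R+1), 2/(R+1),…,1}. -/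
/-!
Let `upperRank x i` be the number of other coordinates `j` with `x i ≤ x j`, so that
`p_val = (upperRank S 0 + 1) / (R + 1)`. Exchangeability makes all the `upperRank S i` equally
distributed, hence `(R + 1) · P(upperRank S 0 ∈ A) = E #{i | upperRank S i ∈ A}`. For every
vector, at most `n` coordinates have `upperRank < n` (all of them lie above the lowest one), and
when the coordinates are distinct `upperRank` is a bijection onto `{0, …, R}`.
-/

open MeasureTheory Finset Function

section Combinatorics

variable {ι α : Type*} [Fintype ι] [DecidableEq ι] [LinearOrder α]

def upperRank (x : ι → α) (i : ι) : ℕ := #{j ∈ univ.erase i | x i ≤ x j}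

lemma upperRank_lt_card (x : ι → α) (i : ι) : upperRank x i < Fintype.card ι :=
  calc upperRank x i ≤ #(univ.erase i) := card_filter_le _ _
    _ < Fintype.card ι := card_erase_lt_of_mem (mem_univ i)

lemma upperRank_comp_perm (x : ι → α) (σ : Equiv.Perm ι) (i : ι) :
    upperRank (x ∘ σ) i = upperRank x (σ i) := by
  refine card_nbij' σ σ.symm (fun j hj => ?_) (fun j hj => ?_) (fun j _ => σ.symm_apply_apply j)
    (fun j _ => σ.apply_symm_apply j) <;> simp_all [Equiv.symm_apply_eq]

lemma upperRank_lt_of_lt {x : ι → α} {i j : ι} (h : x i < x j) :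
    upperRank x j < upperRank x i := by
  refine card_lt_card ((ssubset_iff_of_subset fun k hk => ?_).mpr ⟨j, ?_, ?_⟩)
  · simp only [mem_filter, mem_erase, mem_univ, and_true] at hk ⊢
    exact ⟨by rintro rfl; exact hk.2.not_gt h, h.le.trans hk.2⟩
  · simp [h.le, ne_of_apply_ne x h.ne']
  · simp

lemma upperRank_injective {x : ι → α} (hx : Injective x) : Injective (upperRank x) := by
  intro i j h
  by_contra hij
  rcases (hx.ne hij).lt_or_gt with hlt | hlt
  · exact (upperRank_lt_of_lt hlt).ne' h
  · exact (upperRank_lt_of_lt hlt).ne h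

lemma card_upperRank_lt_le (x : ι → α) (n : ℕ) : #{i | upperRank x i < n} ≤ n := by
  set A := ({i | upperRank x i < n} : Finset ι)
  rcases A.eq_empty_or_nonempty with hA | hA
  · simp [hA]
  obtain ⟨i, hiA, hmin⟩ := A.exists_min_image x hA
  have hsub : A.erase i ⊆ {j ∈ univ.erase i | x i ≤ x j} := fun j hj => by
    simp only [mem_erase] at hj
    simpa [hj.1] using hmin j hj.2
  have hi : upperRank x i < n := (mem_filter.mp hiA).2
  have hcard := card_le_card hsub
  rw [card_erase_of_mem hiA] at hcard
  unfold upperRank at hi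
  omega

lemma card_upperRank_eq_one {x : ι → α} (hx : Injective x) {k : ℕ}
    (hk : k < Fintype.card ι) : #{i | upperRank x i = k} = 1 := by
  let f : ι → Fin (Fintype.card ι) := fun i => ⟨upperRank x i, upperRank_lt_card x i⟩
  have hf : Bijective f := (Fintype.bijective_iff_injective_and_card f).mpr
    ⟨fun i j h => upperRank_injective hx (Fin.mk.inj_iff.mp h), by simp⟩
  obtain ⟨i, hi, huniq⟩ := hf.existsUnique ⟨k, hk⟩
  rw [card_eq_one]
  refine ⟨i, eq_singleton_iff_unique_mem.mpr ⟨by simpa [f] using hi, fun j hj => ?_⟩⟩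
  exact huniq j (by simpa [f] using hj)

lemma upperRank_zero_eq_card {n : ℕ} (x : Fin (n + 1) → α) :
    upperRank x 0 = #{r : Fin n | x 0 ≤ x r.succ} := by
  rw [upperRank, ← card_map (Fin.succEmb n)]
  congr 1
  ext j
  cases j using Fin.cases <;> simp [Fin.succ_ne_zero]

noncomputable def pvalue (x : ι → α) (i : ι) : ℝ := (upperRank x i + 1) / Fintype.card ι

lemma pvalue_le_iff {x : ι → α} {i : ι} {t : ℝ} :
    pvalue x i ≤ t ↔ upperRank x i < ⌊t * Fintype.card ι⌋₊ := by
  have : Nonempty ι := ⟨i⟩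
  rw [pvalue, div_le_iff₀ (by positivity), Nat.lt_iff_add_one_le,
    Nat.le_floor_iff' (Nat.succ_ne_zero _)]
  push_cast
  rfl

lemma pvalue_eq_iff {x : ι → α} {i : ι} {k : ℕ} :
    pvalue x i = (k + 1) / Fintype.card ι ↔ upperRank x i = k := by
  have : Nonempty ι := ⟨i⟩
  rw [pvalue, div_left_inj' (by positivity)]
  norm_cast
  omega

end Combinatorics

lemma natCast_floor_le_ofReal (a : ℝ) : (⌊a⌋₊ : ENNReal) ≤ ENNReal.ofReal a := by
  rw [← ENNReal.ofReal_natCast, ENNReal.ofReal_le_ofReal_iff']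
  rcases le_or_gt 0 a with ha | ha
  · exact .inl (Nat.floor_le ha)
  · simp [Nat.floor_of_nonpos ha.le]

section Exchangeable

variable {Ω ι α : Type*} [MeasurableSpace Ω] [MeasurableSpace α]

def IsExchangeable (X : Ω → ι → α) (μ : Measure Ω) : Prop :=
  ∀ σ : Equiv.Perm ι, μ.map (fun ω => X ω ∘ σ) = μ.map X

variable [Fintype ι] [DecidableEq ι] [LinearOrder α] [TopologicalSpace α]
  [OpensMeasurableSpace α] [OrderClosedTopology α] [SecondCountableTopology α]
  {μ : Measure Ω} {X : Ω → ι → α}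

lemma measurable_upperRank (i : ι) : Measurable fun x : ι → α => upperRank x i := by
  simp_rw [upperRank, card_filter]
  exact Finset.measurable_sum _ fun j _ => Measurable.ite
    (measurableSet_le (measurable_pi_apply i) (measurable_pi_apply j)) measurable_const
    measurable_const

lemma measure_upperRank_eq (hX : Measurable X) (hexch : IsExchangeable X μ)
    (p : ℕ → Prop) (i j : ι) :
    μ {ω | p (upperRank (X ω) i)} = μ {ω | p (upperRank (X ω) j)} := by
  have hs : MeasurableSet {x : ι → α | p (upperRank x i)} :=
    measurable_upperRank i .of_discrete
  have hσ : Measurable fun ω => X ω ∘ Equiv.swap i j := by fun_prop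
  calc μ {ω | p (upperRank (X ω) i)} = μ.map X {x | p (upperRank x i)} :=
        (Measure.map_apply hX hs).symm
    _ = μ.map (fun ω => X ω ∘ Equiv.swap i j) {x | p (upperRank x i)} := by rw [hexch]
    _ = μ {ω | p (upperRank (X ω) j)} := by
        rw [Measure.map_apply hσ hs]
        simp [Set.preimage, upperRank_comp_perm]

lemma card_mul_measure_upperRank (hX : Measurable X) (hexch : IsExchangeable X μ)
    (p : ℕ → Prop) [DecidablePred p] (i : ι) :
    Fintype.card ι * μ {ω | p (upperRank (X ω) i)} =
      ∫⁻ ω, #{j | p (upperRank (X ω) j)} ∂μ := by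
  have hs (j : ι) : MeasurableSet {ω | p (upperRank (X ω) j)} :=
    ((measurable_upperRank j).comp hX) .of_discrete
  calc Fintype.card ι * μ {ω | p (upperRank (X ω) i)}
      = ∑ j, μ {ω | p (upperRank (X ω) j)} := by
        simp [measure_upperRank_eq hX hexch p _ i]
    _ = ∑ j, ∫⁻ ω, {ω | p (upperRank (X ω) j)}.indicator 1 ω ∂μ := by
        simp [lintegral_indicator_one (hs _)]
    _ = ∫⁻ ω, ∑ j, {ω | p (upperRank (X ω) j)}.indicator 1 ω ∂μ :=
        (lintegral_finsetSum _ fun j _ => measurable_const.indicator (hs j)).symm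
    _ = ∫⁻ ω, #{j | p (upperRank (X ω) j)} ∂μ := by
        simp [Set.indicator_apply]

lemma measure_upperRank_lt_le [IsProbabilityMeasure μ] (hX : Measurable X)
    (hexch : IsExchangeable X μ) (n : ℕ) (i : ι) :
    μ {ω | upperRank (X ω) i < n} ≤ n / Fintype.card ι := by
  have : Nonempty ι := ⟨i⟩
  rw [ENNReal.le_div_iff_mul_le (by simp) (by simp), mul_comm,
    card_mul_measure_upperRank hX hexch (· < n)]
  calc ∫⁻ ω, (#{j | upperRank (X ω) j < n} : ENNReal) ∂μ
      ≤ ∫⁻ _, (n : ENNReal) ∂μ :=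
        lintegral_mono fun ω => Nat.cast_le.mpr (card_upperRank_lt_le (X ω) n)
    _ = n := by simp

lemma measure_upperRank_eq_inv [IsProbabilityMeasure μ] (hX : Measurable X)
    (hexch : IsExchangeable X μ) (hinj : ∀ᵐ ω ∂μ, Injective (X ω)) {k : ℕ}
    (hk : k < Fintype.card ι) (i : ι) :
    μ {ω | upperRank (X ω) i = k} = (Fintype.card ι : ENNReal)⁻¹ := by
  refine ENNReal.eq_inv_of_mul_eq_one_left ?_
  rw [mul_comm, card_mul_measure_upperRank hX hexch (· = k)]
  calc ∫⁻ ω, (#{j | upperRank (X ω) j = k} : ENNReal) ∂μ = ∫⁻ _, 1 ∂μ :=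
        lintegral_congr_ae (hinj.mono fun ω hω => by simp [card_upperRank_eq_one hω hk])
    _ = 1 := by simp

lemma measure_pvalue_le_le [IsProbabilityMeasure μ] (hX : Measurable X)
    (hexch : IsExchangeable X μ) (t : ℝ) (i : ι) :
    μ {ω | pvalue (X ω) i ≤ t} ≤ ENNReal.ofReal t := by
  simp_rw [pvalue_le_iff]
  refine (measure_upperRank_lt_le hX hexch _ i).trans (ENNReal.div_le_of_le_mul ?_)
  calc (⌊t * Fintype.card ι⌋₊ : ENNReal) ≤ ENNReal.ofReal (t * Fintype.card ι) :=
        natCast_floor_le_ofReal _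
    _ = ENNReal.ofReal t * Fintype.card ι := by
        rw [ENNReal.ofReal_mul' (Nat.cast_nonneg _), ENNReal.ofReal_natCast]

lemma measure_pvalue_eq_inv [IsProbabilityMeasure μ] (hX : Measurable X)
    (hexch : IsExchangeable X μ) (hinj : ∀ᵐ ω ∂μ, Injective (X ω)) {k : ℕ}
    (hk : k < Fintype.card ι) (i : ι) :
    μ {ω | pvalue (X ω) i = (k + 1) / Fintype.card ι} = (Fintype.card ι : ENNReal)⁻¹ := by
  simp_rw [pvalue_eq_iff]
  exact measure_upperRank_eq_inv hX hexch hinj hk i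

end Exchangeable

/-- If `(S 0, S 1, …, S R)` is an exchangeable tuple of real random
variables and `p_val = (1 + #{r ≥ 1 : S 0 ≤ S r}) / (R+1)`, then `p_val` is superuniform:
`P(p_val ≤ α) ≤ α` for all `α ∈ (0,1)`. Moreover, if almost surely all the `S r` are
distinct, then `p_val` is uniformly distributed on `{1/(R+1), …, (R+1)/(R+1)}`. -/
theorem mosaic_pvalue_superuniform_and_uniform
    {Ω : Type*} [MeasurableSpace Ω] (μ : Measure Ω) [IsProbabilityMeasure μ]
    (R : ℕ) (S : Fin (R + 1) → Ω → ℝ)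
    (hmeas : ∀ r, Measurable (S r))
    (hexch : ∀ τ : Equiv.Perm (Fin (R + 1)),
      Measure.map (fun ω => fun r => S (τ r) ω) μ = Measure.map (fun ω => fun r => S r ω) μ)
    (pval : Ω → ℝ)
    (hpval : ∀ ω, pval ω =
      (1 + ∑ r : Fin R, if S 0 ω ≤ S r.succ ω then (1 : ℝ) else 0) / (R + 1)) :
    (∀ α ∈ Set.Ioo (0 : ℝ) 1, μ {ω | pval ω ≤ α} ≤ ENNReal.ofReal α) ∧
    ((∀ᵐ ω ∂μ, Function.Injective (fun r => S r ω)) →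
      ∀ k : Fin (R + 1), μ {ω | pval ω = ((k : ℕ) + 1 : ℝ) / (R + 1)} = 1 / (R + 1)) := by
  set X : Ω → Fin (R + 1) → ℝ := fun ω r => S r ω
  have hX : Measurable X := measurable_pi_lambda _ hmeas
  have hXexch : IsExchangeable X μ := hexch
  obtain rfl : pval = fun ω => pvalue (X ω) 0 := funext fun ω => by
    rw [hpval, pvalue, upperRank_zero_eq_card, natCast_card_filter, add_comm]
    simp [X]
  refine ⟨fun α _ => measure_pvalue_le_le hX hXexch α 0, fun hinj k => ?_⟩
  simpa using measure_pvalue_eq_inv hX hXexch hinj (by simpa using k.isLt) 0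
end
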